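/- Let β > 1. The total variation ‖ν_β^{(n)}‖ of the signed measure ν_β^{(n)} = *_{j=1}^n ((1/2)δ_{β^{-j}} − (1/2)δ_{−β^{-j}}) is strictly less than 1 if and only if there exist signs η_0, …, η_{n−1} ∈ {0, ±1}, with η_0 + ⋯ + η_{n−1} odd, such that Σ_{j=0}^{n−1} η_j β^j = 0. -/

import Mathlib

open MeasureTheory

/-- The signed Bernoulli convolution ν_β^{(n)} = 2^{-n} Σ_{ε∈{±1}^n} ε₁⋯εₙ δ_{Σ εⱼ β^{-j}}. -/
noncomputable def signedBernoulli (β : ℝ) (n : ℕ) : SignedMeasure ℝ :=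
  (2 ^ n : ℝ)⁻¹ • ∑ ε : Fin n → Bool,
    (∏ j, (if ε j then (1 : ℝ) else -1)) •
      (Measure.dirac (∑ j : Fin n, (if ε j then (1 : ℝ) else -1) *
        β ^ (-((j : ℕ) : ℤ) - 1))).toSignedMeasure

/-- Total variation norm of ν_β^{(n)}. -/
noncomputable def signedBernoulliTV (β : ℝ) (n : ℕ) : ℝ :=
  ((signedBernoulli β n).totalVariation Set.univ).toReal

/-!
Grouping the `2ⁿ` atoms of `ν_β^{(n)}` by location, its total variation becomes
`2⁻ⁿ ∑ₓ |∑_{ε ↦ x} ε₁⋯εₙ|`, which is `< 1` exactly when two sign sequences `ε, ε'` with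
`ε₁⋯εₙ = -ε'₁⋯ε'ₙ` land on the same atom. With `η = (ε - ε') / 2 ∈ {0, ±1}ⁿ` such a collision
reads `∑ ηⱼ β^(-j-1) = 0`, i.e. `∑ ηⱼ β^j = 0` after multiplying by `βⁿ` and reversing the
indices, and the two sign products differ exactly when an odd number of the `ηⱼ` are nonzero,
i.e. when `∑ ηⱼ` is odd.
-/

open Finset

theorem prod_zpow_eq_zpow_sum₀ {ι G₀ : Type*} [CommGroupWithZero G₀] {a : G₀} (ha : a ≠ 0)
    (s : Finset ι) (f : ι → ℤ) : ∏ i ∈ s, a ^ f i = a ^ ∑ i ∈ s, f i := by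
  classical
  induction s using Finset.induction_on with
  | empty => simp
  | insert i s hi ih => rw [prod_insert hi, sum_insert hi, ih, zpow_add₀ ha]

theorem neg_one_zpow_neg_iff {K : Type*} [Field K] [LinearOrder K] [IsStrictOrderedRing K]
    (m : ℤ) : (-1 : K) ^ m < 0 ↔ Odd m := by
  rcases Int.even_or_odd m with hm | hm
  · simp [hm.neg_one_zpow, Int.not_odd_iff_even.2 hm]
  · simp [hm.neg_one_zpow, hm]

theorem Finset.sum_lt_sum_iff_of_le {ι M : Type*} [AddCommMonoid M] [LinearOrder M]
    [IsOrderedCancelAddMonoid M] {s : Finset ι} {f g : ι → M} (hle : ∀ i ∈ s, f i ≤ g i) :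
    ∑ i ∈ s, f i < ∑ i ∈ s, g i ↔ ∃ i ∈ s, f i < g i := by
  refine ⟨fun hlt => ?_, sum_lt_sum hle⟩
  by_contra! hge
  exact hlt.not_ge (sum_le_sum hge)

section StrictTriangle

variable {ι R : Type*} [CommRing R] [LinearOrder R] [IsStrictOrderedRing R] {s : Finset ι}
  {a : ι → R}

theorem Finset.abs_sum_lt_sum_abs_iff :
    |∑ i ∈ s, a i| < ∑ i ∈ s, |a i| ↔ ∃ i ∈ s, ∃ j ∈ s, a i * a j < 0 := by
  constructor
  · intro hlt
    by_contra! hsame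
    refine hlt.ne ?_
    by_cases hneg : ∃ i ∈ s, a i < 0
    · obtain ⟨i, hi, hai⟩ := hneg
      have hnonpos : ∀ j ∈ s, a j ≤ 0 := fun j hj =>
        nonpos_of_mul_nonneg_right (hsame i hi j hj) hai
      rw [abs_of_nonpos (sum_nonpos hnonpos), ← sum_neg_distrib]
      exact sum_congr rfl fun j hj => (abs_of_nonpos (hnonpos j hj)).symm
    · push Not at hneg
      rw [abs_of_nonneg (sum_nonneg hneg)]
      exact sum_congr rfl fun j hj => (abs_of_nonneg (hneg j hj)).symm
  · rintro ⟨i, hi, j, hj, hij⟩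
    obtain ⟨⟨k, hk, hak⟩, ⟨l, hl, hal⟩⟩ : (∃ k ∈ s, a k < 0) ∧ ∃ l ∈ s, 0 < a l := by
      rcases mul_neg_iff.1 hij with ⟨hai, haj⟩ | ⟨hai, haj⟩
      exacts [⟨⟨j, hj, haj⟩, i, hi, hai⟩, ⟨⟨i, hi, hai⟩, j, hj, haj⟩]
    rw [abs_lt, ← sum_neg_distrib]
    exact ⟨sum_lt_sum (fun i _ => neg_abs_le (a i))
        ⟨l, hl, (neg_nonpos.2 (abs_nonneg _)).trans_lt hal⟩,
      sum_lt_sum (fun i _ => le_abs_self (a i)) ⟨k, hk, hak.trans_le (abs_nonneg _)⟩⟩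

theorem Finset.sum_abs_sum_fiber_lt_sum_abs_iff {κ : Type*} [DecidableEq κ] {f : ι → κ} :
    ∑ y ∈ s.image f, |∑ i ∈ s with f i = y, a i| < ∑ i ∈ s, |a i| ↔
      ∃ i ∈ s, ∃ j ∈ s, f i = f j ∧ a i * a j < 0 := by
  rw [← sum_fiberwise_of_maps_to (fun i hi => mem_image_of_mem f hi) (fun i => |a i|),
    sum_lt_sum_iff_of_le fun _ _ => abs_sum_le_sum_abs _ _]
  simp_rw [abs_sum_lt_sum_abs_iff, mem_filter]
  constructor
  · rintro ⟨y, -, i, ⟨hi, rfl⟩, j, ⟨hj, hfj⟩, hij⟩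
    exact ⟨i, hi, j, hj, hfj.symm, hij⟩
  · rintro ⟨i, hi, j, hj, hfij, hij⟩
    exact ⟨f i, mem_image_of_mem f hi, i, ⟨hi, rfl⟩, j, ⟨hj, hfij.symm⟩, hij⟩

end StrictTriangle

namespace MeasureTheory

variable {α : Type*} [MeasurableSpace α]

section FinsetDirac

variable [MeasurableSingletonClass α] (s : Finset α) (c : α → ℝ)

noncomputable def JordanDecomposition.finsetDirac : JordanDecomposition α where
  posPart := ∑ x ∈ s, (c x).toNNReal • Measure.dirac x
  negPart := ∑ x ∈ s, (-c x).toNNReal • Measure.dirac x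
  mutuallySingular := by
    classical
    refine ⟨(s.filter (c · ≤ 0) : Finset α), Finset.measurableSet _, ?_, ?_⟩ <;>
      rw [Measure.finsetSum_apply] <;> refine Finset.sum_eq_zero fun x hx => ?_
    · by_cases h : c x ≤ 0 <;> simp [h, Real.toNNReal_of_nonpos]
    · by_cases h : c x ≤ 0 <;> simp [h, hx]
      linarith

theorem JordanDecomposition.finsetDirac_toSignedMeasure :
    (finsetDirac s c).toSignedMeasure = ∑ x ∈ s, c x • (Measure.dirac x).toSignedMeasure := by
  ext A hA
  simp only [toSignedMeasure, finsetDirac, Measure.toSignedMeasure_sub_apply hA, Measure.real,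
    Measure.finsetSum_apply, _root_.sum_apply, _root_.smul_apply,
    Measure.toSignedMeasure_apply_measurable hA]
  rw [ENNReal.toReal_sum (fun _ _ => by finiteness), ENNReal.toReal_sum (fun _ _ => by finiteness),
    ← sum_sub_distrib]
  refine sum_congr rfl fun x _ => ?_
  simp only [Measure.smul_apply, ENNReal.smul_def, smul_eq_mul, ENNReal.toReal_mul,
    ENNReal.coe_toReal, Real.coe_toNNReal', ← sub_mul, max_zero_sub_max_neg_zero_eq_self]

theorem SignedMeasure.totalVariation_finset_sum_smul_dirac :
    ((∑ x ∈ s, c x • (Measure.dirac x).toSignedMeasure).totalVariation Set.univ).toReal =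
      ∑ x ∈ s, |c x| := by
  rw [← JordanDecomposition.finsetDirac_toSignedMeasure, totalVariation,
    JordanDecomposition.toJordanDecomposition_toSignedMeasure]
  simp only [JordanDecomposition.finsetDirac, Measure.add_apply, Measure.finsetSum_apply,
    Measure.smul_apply, measure_univ, ENNReal.smul_def, smul_eq_mul, mul_one, ← sum_add_distrib,
    ← ENNReal.coe_add, ← ENNReal.ofNNReal_finsetSum, ENNReal.coe_toReal, NNReal.coe_sum,
    NNReal.coe_add, Real.coe_toNNReal', max_zero_add_max_neg_zero_eq_abs_self]

end FinsetDirac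

namespace SignedMeasure

variable {ι : Type*} (s : Finset ι) (f : ι → α) (a : ι → ℝ)

theorem finset_sum_smul_dirac_eq_sum_image [DecidableEq α] :
    ∑ i ∈ s, a i • (Measure.dirac (f i)).toSignedMeasure =
      ∑ y ∈ s.image f, (∑ i ∈ s with f i = y, a i) • (Measure.dirac y).toSignedMeasure := by
  rw [← sum_fiberwise_of_maps_to (fun i hi => mem_image_of_mem f hi)]
  refine sum_congr rfl fun y _ => ?_
  rw [sum_smul]
  exact sum_congr rfl fun i hi => by rw [(mem_filter.1 hi).2]

theorem totalVariation_finset_sum_smul_dirac_lt_iff [MeasurableSingletonClass α] :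
    ((∑ i ∈ s, a i • (Measure.dirac (f i)).toSignedMeasure).totalVariation Set.univ).toReal <
        ∑ i ∈ s, |a i| ↔
      ∃ i ∈ s, ∃ j ∈ s, f i = f j ∧ a i * a j < 0 := by
  classical
  rw [finset_sum_smul_dirac_eq_sum_image, totalVariation_finset_sum_smul_dirac,
    sum_abs_sum_fiber_lt_sum_abs_iff]

end SignedMeasure

end MeasureTheory

def boolSign (b : Bool) : ℝ := if b then 1 else -1

theorem boolSign_sub_boolSign (a b : Bool) :
    boolSign a - boolSign b = 2 * (((a.toNat : ℤ) - b.toNat : ℤ) : ℝ) := by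
  cases a <;> cases b <;> norm_num [boolSign]

theorem boolSign_mul_boolSign (a b : Bool) :
    boolSign a * boolSign b = (-1) ^ ((a.toNat : ℤ) - b.toNat) := by
  cases a <;> cases b <;> norm_num [boolSign]

theorem abs_boolSign (a : Bool) : |boolSign a| = 1 := by
  cases a <;> norm_num [boolSign]

theorem Int.eq_zero_or_eq_one_or_eq_neg_one_iff (m : ℤ) :
    m = 0 ∨ m = 1 ∨ m = -1 ↔ ∃ a b : Bool, (a.toNat : ℤ) - b.toNat = m := by
  constructor
  · rintro (rfl | rfl | rfl)
    exacts [⟨false, false, rfl⟩, ⟨true, false, rfl⟩, ⟨false, true, rfl⟩]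
  · rintro ⟨a, b, rfl⟩
    cases a <;> cases b <;> simp

section BoolSign

variable {ι : Type*} [Fintype ι]

theorem sum_boolSign_mul_sub_sum_boolSign_mul (ε ε' : ι → Bool) (x : ι → ℝ) :
    ∑ j, boolSign (ε j) * x j - ∑ j, boolSign (ε' j) * x j =
      2 * ∑ j, ((((ε j).toNat : ℤ) - (ε' j).toNat : ℤ) : ℝ) * x j := by
  simp only [← sum_sub_distrib, ← sub_mul, boolSign_sub_boolSign, mul_sum, mul_assoc]

theorem prod_boolSign_mul_prod_boolSign (ε ε' : ι → Bool) :
    (∏ j, boolSign (ε j)) * ∏ j, boolSign (ε' j) =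
      (-1) ^ ∑ j, (((ε j).toNat : ℤ) - (ε' j).toNat) := by
  rw [← prod_mul_distrib, ← prod_zpow_eq_zpow_sum₀ (by norm_num)]
  exact prod_congr rfl fun j _ => boolSign_mul_boolSign _ _

theorem exists_boolSign_collision_iff (x : ι → ℝ) :
    (∃ ε ε' : ι → Bool, ∑ j, boolSign (ε j) * x j = ∑ j, boolSign (ε' j) * x j ∧
        (∏ j, boolSign (ε j)) * ∏ j, boolSign (ε' j) < 0) ↔
      ∃ η : ι → ℤ, (∀ j, η j = 0 ∨ η j = 1 ∨ η j = -1) ∧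
        Odd (∑ j, η j) ∧ ∑ j, (η j : ℝ) * x j = 0 := by
  constructor
  · rintro ⟨ε, ε', hx, hsign⟩
    refine ⟨fun j => (ε j).toNat - (ε' j).toNat,
      fun j => (Int.eq_zero_or_eq_one_or_eq_neg_one_iff _).2 ⟨_, _, rfl⟩, ?_, ?_⟩
    · rwa [prod_boolSign_mul_prod_boolSign, neg_one_zpow_neg_iff] at hsign
    · have hdiff := sum_boolSign_mul_sub_sum_boolSign_mul ε ε' x
      rw [hx, sub_self, eq_comm, mul_eq_zero] at hdiff
      exact hdiff.resolve_left two_ne_zero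
  · rintro ⟨η, hη, hodd, hx⟩
    choose ε ε' hεε' using fun j => (Int.eq_zero_or_eq_one_or_eq_neg_one_iff _).1 (hη j)
    obtain rfl : η = fun j => ((ε j).toNat : ℤ) - (ε' j).toNat := (funext hεε').symm
    refine ⟨ε, ε', ?_, ?_⟩
    · rw [← sub_eq_zero, sum_boolSign_mul_sub_sum_boolSign_mul, hx, mul_zero]
    · rwa [prod_boolSign_mul_prod_boolSign, neg_one_zpow_neg_iff]

end BoolSign

theorem sum_mul_zpow_neg_sub_one {β : ℝ} (hβ : β ≠ 0) {n : ℕ} (c : Fin n → ℝ) :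
    ∑ j : Fin n, c j * β ^ (-((j : ℕ) : ℤ) - 1) =
      β ^ (-(n : ℤ)) * ∑ j : Fin n, c (Fin.rev j) * β ^ (j : ℕ) := by
  rw [mul_sum, ← Equiv.sum_comp Fin.revPerm]
  refine sum_congr rfl fun j _ => ?_
  simp only [Fin.revPerm_apply, Fin.val_rev]
  rw [mul_left_comm, ← zpow_natCast, ← zpow_add₀ hβ]
  congr 2
  omega

theorem exists_signed_relation_zpow_neg_iff {β : ℝ} (hβ : β ≠ 0) (n : ℕ) :
    (∃ η : Fin n → ℤ, (∀ j, η j = 0 ∨ η j = 1 ∨ η j = -1) ∧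
        Odd (∑ j, η j) ∧ ∑ j, (η j : ℝ) * β ^ (-((j : ℕ) : ℤ) - 1) = 0) ↔
      ∃ η : Fin n → ℤ, (∀ j, η j = 0 ∨ η j = 1 ∨ η j = -1) ∧
        Odd (∑ j, η j) ∧ ∑ j, (η j : ℝ) * β ^ (j : ℕ) = 0 := by
  have hrel : ∀ η : Fin n → ℤ, ∑ j, (η j : ℝ) * β ^ (-((j : ℕ) : ℤ) - 1) = 0 ↔
      ∑ j, (η (Fin.rev j) : ℝ) * β ^ (j : ℕ) = 0 := fun η => by
    rw [sum_mul_zpow_neg_sub_one hβ, mul_eq_zero, or_iff_right (zpow_ne_zero _ hβ)]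
  have hsum : ∀ η : Fin n → ℤ, ∑ j, η (Fin.rev j) = ∑ j, η j :=
    fun η => Equiv.sum_comp Fin.revPerm η
  constructor
  · rintro ⟨η, hη, hodd, hx⟩
    exact ⟨fun j => η (Fin.rev j), fun j => hη _, by rwa [hsum], (hrel η).1 hx⟩
  · rintro ⟨η, hη, hodd, hx⟩
    refine ⟨fun j => η (Fin.rev j), fun j => hη _, by rwa [hsum], (hrel _).2 ?_⟩
    simpa only [Fin.rev_rev] using hx

theorem signedBernoulli_eq_sum (β : ℝ) (n : ℕ) :
    signedBernoulli β n = ∑ ε : Fin n → Bool, ((2 ^ n : ℝ)⁻¹ * ∏ j, boolSign (ε j)) •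
      (Measure.dirac (∑ j : Fin n, boolSign (ε j) * β ^ (-((j : ℕ) : ℤ) - 1))).toSignedMeasure := by
  simp only [signedBernoulli, smul_sum, smul_smul]
  rfl

theorem signedBernoulliTV_lt_one_iff (β : ℝ) (n : ℕ) :
    signedBernoulliTV β n < 1 ↔
      ∃ ε ε' : Fin n → Bool,
        ∑ j, boolSign (ε j) * β ^ (-((j : ℕ) : ℤ) - 1) =
          ∑ j, boolSign (ε' j) * β ^ (-((j : ℕ) : ℤ) - 1) ∧
        (∏ j, boolSign (ε j)) * ∏ j, boolSign (ε' j) < 0 := by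
  have hmass : ∑ ε : Fin n → Bool, |(2 ^ n : ℝ)⁻¹ * ∏ j, boolSign (ε j)| = 1 := by
    simp [abs_prod, abs_boolSign]
  have hscale : ∀ u v : ℝ, (2 ^ n : ℝ)⁻¹ * u * ((2 ^ n : ℝ)⁻¹ * v) < 0 ↔ u * v < 0 := by
    intro u v
    rw [mul_mul_mul_comm, ← not_le, ← not_le, mul_nonneg_iff_right_nonneg_of_pos (by positivity)]
  rw [signedBernoulliTV, signedBernoulli_eq_sum, ← hmass,
    SignedMeasure.totalVariation_finset_sum_smul_dirac_lt_iff]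
  simp only [mem_univ, true_and, hscale]

theorem stmt_14 (β : ℝ) (hβ : 1 < β) (n : ℕ) :
    signedBernoulliTV β n < 1 ↔
      ∃ η : Fin n → ℤ, (∀ j, η j = 0 ∨ η j = 1 ∨ η j = -1) ∧
        Odd (∑ j, η j) ∧ (∑ j, (η j : ℝ) * β ^ (j : ℕ)) = 0 := by
  rw [signedBernoulliTV_lt_one_iff, exists_boolSign_collision_iff,
    exists_signed_relation_zpow_neg_iff (zero_lt_one.trans hβ).ne']
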